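/- For a lazy reversible Markov chain on a finite state space, the return probabilities are monotone: p^{t+1}(x,x) ≤ p^t(x,x) for all x and all t ≥ 0. -/

import Mathlib

lemma quad_aux {V : Type*} [Fintype V] (π : V → ℝ) (Q : Matrix V V ℝ)
    (hπ : ∀ x, 0 ≤ π x) (hnn : ∀ x y, 0 ≤ Q x y) (hrow : ∀ x, ∑ y, Q x y = 1)
    (hrev : ∀ x y, π x * Q x y = π y * Q y x) (f : V → ℝ) (ε : ℝ) (hε : ε = 1 ∨ ε = -1) :
    0 ≤ ∑ x, π x * f x ^ 2 + ε * ∑ x, ∑ y, π x * Q x y * f x * f y := by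
  have h1 : ∑ x, ∑ y, (1/2 : ℝ) * (π x * Q x y * f x ^ 2) = (1/2) * ∑ x, π x * f x ^ 2 := by
    rw [Finset.mul_sum]
    refine Finset.sum_congr rfl fun x _ => ?_
    calc ∑ y, (1/2 : ℝ) * (π x * Q x y * f x ^ 2)
        = (∑ y, Q x y) * ((1/2) * (π x * f x ^ 2)) := by
          rw [Finset.sum_mul]; exact Finset.sum_congr rfl fun y _ => by ring
      _ = (1/2) * (π x * f x ^ 2) := by rw [hrow x, one_mul]
  have h2 : ∑ x, ∑ y, (1/2 : ℝ) * (π x * Q x y * f y ^ 2) = (1/2) * ∑ x, π x * f x ^ 2 := by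
    have e : ∀ x y, (1/2 : ℝ) * (π x * Q x y * f y ^ 2) = (1/2) * (π y * Q y x * f y ^ 2) := by
      intro x y; rw [hrev]
    rw [Finset.sum_congr rfl fun x _ => Finset.sum_congr rfl fun y _ => e x y]
    rw [Finset.sum_comm, Finset.mul_sum]
    refine Finset.sum_congr rfl fun y _ => ?_
    calc ∑ x, (1/2 : ℝ) * (π y * Q y x * f y ^ 2)
        = (∑ x, Q y x) * ((1/2) * (π y * f y ^ 2)) := by
          rw [Finset.sum_mul]; exact Finset.sum_congr rfl fun x _ => by ring
      _ = (1/2) * (π y * f y ^ 2) := by rw [hrow y, one_mul]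
  have hε2 : ε * ε = 1 := by rcases hε with h | h <;> subst h <;> norm_num
  have key : 0 ≤ ∑ x, ∑ y, (1/2 : ℝ) * (π x * Q x y * (f x + ε * f y) ^ 2) := by
    refine Finset.sum_nonneg fun x _ => Finset.sum_nonneg fun y _ => ?_
    have := mul_nonneg (mul_nonneg (hπ x) (hnn x y)) (sq_nonneg (f x + ε * f y))
    linarith
  have expand : ∀ x y, (1/2 : ℝ) * (π x * Q x y * (f x + ε * f y) ^ 2)
      = (1/2) * (π x * Q x y * f x ^ 2) + ε * (π x * Q x y * f x * f y)
        + (1/2) * (π x * Q x y * f y ^ 2) := by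
    intro x y
    have : (f x + ε * f y) ^ 2 = f x ^ 2 + 2 * ε * (f x * f y) + (ε * ε) * f y ^ 2 := by ring
    rw [this, hε2]; ring
  simp_rw [expand, Finset.sum_add_distrib] at key
  rw [h1, h2] at key
  have h3 : ∑ x, ∑ y, ε * (π x * Q x y * f x * f y)
      = ε * ∑ x, ∑ y, π x * Q x y * f x * f y := by
    rw [Finset.mul_sum]
    exact Finset.sum_congr rfl fun x _ => by rw [Finset.mul_sum]
  rw [h3] at key
  linarith

/-- For a lazy reversible Markov chain on a finite state space, the return
probabilities are monotone: `p^{t+1}(x,x) ≤ p^t(x,x)` for all `x` and `t ≥ 0`. -/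
theorem lazy_reversible_return_prob_antitone
    {V : Type*} [Fintype V] [DecidableEq V] [Nonempty V]
    (P : Matrix V V ℝ) (π : V → ℝ)
    (hnn : ∀ x y, 0 ≤ P x y) (hrow : ∀ x, ∑ y, P x y = 1)
    (hlazy : ∀ x, 1 / 2 ≤ P x x)
    (hπpos : ∀ x, 0 < π x) (hπsum : ∑ x, π x = 1)
    (hrev : ∀ x y, π x * P x y = π y * P y x) :
    ∀ (t : ℕ) (x : V), (P ^ (t + 1)) x x ≤ (P ^ t) x x := by
  classical
  set D : Matrix V V ℝ := Matrix.diagonal (fun z => Real.sqrt (π z)) with hD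
  set E : Matrix V V ℝ := Matrix.diagonal (fun z => (Real.sqrt (π z))⁻¹) with hE
  have hsqpos : ∀ z, 0 < Real.sqrt (π z) := fun z => Real.sqrt_pos.mpr (hπpos z)
  have hsq : ∀ z, Real.sqrt (π z) ≠ 0 := fun z => (hsqpos z).ne'
  have hmul : ∀ z, Real.sqrt (π z) * Real.sqrt (π z) = π z :=
    fun z => Real.mul_self_sqrt (hπpos z).le
  have hinv : ∀ z, π z * (Real.sqrt (π z))⁻¹ = Real.sqrt (π z) := fun z => by
    rw [inv_eq_one_div, mul_one_div, div_eq_iff (hsq z)]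
    exact (hmul z).symm
  have hDE : D * E = 1 := by
    rw [hD, hE, Matrix.diagonal_mul_diagonal,
      show (fun z => Real.sqrt (π z) * (Real.sqrt (π z))⁻¹) = fun _ => (1 : ℝ) from
        funext fun z => mul_inv_cancel₀ (hsq z), Matrix.diagonal_one]
  have hED : E * D = 1 := by
    rw [hD, hE, Matrix.diagonal_mul_diagonal,
      show (fun z => (Real.sqrt (π z))⁻¹ * Real.sqrt (π z)) = fun _ => (1 : ℝ) from
        funext fun z => inv_mul_cancel₀ (hsq z), Matrix.diagonal_one]
  set S : Matrix V V ℝ := D * P * E with hS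
  have hSentry : ∀ a b, S a b = Real.sqrt (π a) * P a b * (Real.sqrt (π b))⁻¹ := by
    intro a b
    rw [hS, hE, Matrix.mul_diagonal, hD, Matrix.diagonal_mul]
  have hSpow : ∀ n : ℕ, S ^ n = D * P ^ n * E := by
    intro n
    induction n with
    | zero => rw [pow_zero, pow_zero, Matrix.mul_one, hDE]
    | succ n ih =>
      rw [pow_succ, ih, pow_succ, hS]
      calc D * P ^ n * E * (D * P * E) = D * P ^ n * (E * D) * (P * E) := by
            simp only [Matrix.mul_assoc]
        _ = D * (P ^ n * P) * E := by rw [hED, Matrix.mul_one]; simp only [Matrix.mul_assoc]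
  have hdiag : ∀ (n : ℕ) (x : V), (S ^ n) x x = (P ^ n) x x := by
    intro n x
    rw [hSpow n]
    have : (D * P ^ n * E) x x = Real.sqrt (π x) * (P ^ n) x x * (Real.sqrt (π x))⁻¹ := by
      simp [hD, hE, Matrix.mul_diagonal, Matrix.diagonal_mul]
    rw [this, mul_comm (Real.sqrt (π x)) ((P ^ n) x x), mul_assoc,
      mul_inv_cancel₀ (hsq x), mul_one]
  have hHerm : S.IsHermitian := by
    ext a b
    rw [Matrix.conjTranspose_apply, star_trivial, hSentry a b, hSentry b a]
    calc Real.sqrt (π b) * P b a * (Real.sqrt (π a))⁻¹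
        = (π b * P b a) * ((Real.sqrt (π b))⁻¹ * (Real.sqrt (π a))⁻¹) := by
          conv_lhs => rw [← hinv b]
          ring
      _ = (π a * P a b) * ((Real.sqrt (π b))⁻¹ * (Real.sqrt (π a))⁻¹) := by rw [hrev b a]
      _ = Real.sqrt (π a) * P a b * (Real.sqrt (π b))⁻¹ := by
          conv_rhs => rw [← hinv a]
          ring
  -- quadratic form of S
  have hform : ∀ v : V → ℝ, dotProduct v (S.mulVec v)
      = ∑ x, ∑ y, π x * P x y * ((Real.sqrt (π x))⁻¹ * v x) * ((Real.sqrt (π y))⁻¹ * v y) := by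
    intro v
    rw [dotProduct]
    simp_rw [Matrix.mulVec, dotProduct, Finset.mul_sum]
    refine Finset.sum_congr rfl fun x _ => Finset.sum_congr rfl fun y _ => ?_
    rw [hSentry x y]
    calc v x * (Real.sqrt (π x) * P x y * (Real.sqrt (π y))⁻¹ * v y)
        = (π x * (Real.sqrt (π x))⁻¹) * P x y * (Real.sqrt (π y))⁻¹ * v x * v y := by
          rw [hinv x]; ring
      _ = π x * P x y * ((Real.sqrt (π x))⁻¹ * v x) * ((Real.sqrt (π y))⁻¹ * v y) := by ring
  have hnormEq : ∀ v : V → ℝ,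
      ∑ x, π x * ((Real.sqrt (π x))⁻¹ * v x) ^ 2 = ∑ x, v x * v x := by
    intro v
    refine Finset.sum_congr rfl fun x _ => ?_
    have hx : π x * ((Real.sqrt (π x))⁻¹ * (Real.sqrt (π x))⁻¹) = 1 := by
      rw [← mul_inv, hmul x]
      exact mul_inv_cancel₀ (hπpos x).ne'
    calc π x * ((Real.sqrt (π x))⁻¹ * v x) ^ 2
        = (π x * ((Real.sqrt (π x))⁻¹ * (Real.sqrt (π x))⁻¹)) * (v x * v x) := by ring
      _ = v x * v x := by rw [hx, one_mul]
  have hSpsd : S.PosSemidef := by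
    refine Matrix.PosSemidef.of_dotProduct_mulVec_nonneg hHerm fun v => ?_
    rw [star_trivial, hform v]
    set f : V → ℝ := fun x => (Real.sqrt (π x))⁻¹ * v x with hf
    -- use lazy matrix Q = 2P - 1
    set Q : Matrix V V ℝ := fun a b => 2 * P a b - (if a = b then 1 else 0) with hQ
    have hQnn : ∀ a b, 0 ≤ Q a b := by
      intro a b
      by_cases h : a = b
      · subst h; simp [hQ]; linarith [hlazy a]
      · simp [hQ, h]; linarith [hnn a b]
    have hQrow : ∀ a, ∑ b, Q a b = 1 := by
      intro a
      simp only [hQ]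
      rw [Finset.sum_sub_distrib, ← Finset.mul_sum, hrow a, mul_one, Finset.sum_ite_eq]
      norm_num
    have hQrev : ∀ a b, π a * Q a b = π b * Q b a := by
      intro a b
      simp only [hQ]
      by_cases h : a = b
      · subst h; ring
      · simp [h, Ne.symm h]
        linear_combination 2 * hrev a b
    have := quad_aux π Q (fun z => (hπpos z).le) hQnn hQrow hQrev f 1 (Or.inl rfl)
    have hrel : ∑ x, ∑ y, π x * Q x y * f x * f y
        = 2 * (∑ x, ∑ y, π x * P x y * f x * f y) - ∑ x, π x * f x ^ 2 := by
      have e : ∀ x, ∑ y, π x * Q x y * f x * f y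
          = (∑ y, 2 * (π x * P x y * f x * f y)) - π x * f x ^ 2 := by
        intro x
        simp only [hQ]
        have e2 : ∀ y, π x * (2 * P x y - if x = y then 1 else 0) * f x * f y
            = 2 * (π x * P x y * f x * f y) - (if x = y then π x * f x ^ 2 else 0) := by
          intro y
          by_cases h : x = y
          · subst h; simp; ring
          · simp [h]; ring
        rw [Finset.sum_congr rfl fun y _ => e2 y, Finset.sum_sub_distrib,
          Finset.sum_ite_eq, if_pos (Finset.mem_univ x)]
      simp_rw [e, Finset.sum_sub_distrib]
      rw [Finset.mul_sum]
      congr 1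
      exact Finset.sum_congr rfl fun x _ => by rw [Finset.mul_sum]
    rw [hrel] at this
    simp only [one_mul] at this
    linarith
  have h1Spsd : (1 - S).PosSemidef := by
    have hHerm1 : (1 - S).IsHermitian := by
      unfold Matrix.IsHermitian
      rw [Matrix.conjTranspose_sub, Matrix.conjTranspose_one, hHerm]
    refine Matrix.PosSemidef.of_dotProduct_mulVec_nonneg hHerm1 fun v => ?_
    rw [star_trivial, Matrix.sub_mulVec, dotProduct_sub, Matrix.one_mulVec, hform v]
    set f : V → ℝ := fun x => (Real.sqrt (π x))⁻¹ * v x with hf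
    have := quad_aux π P (fun z => (hπpos z).le) hnn hrow hrev f (-1) (Or.inr rfl)
    have hn := hnormEq v
    simp only [hf] at this ⊢
    rw [dotProduct]
    nlinarith [this, hn]
  -- square root
  open scoped MatrixOrder in
  set R : Matrix V V ℝ := CFC.sqrt S with hR
  open scoped MatrixOrder in
  have hRR : R * R = S := CFC.sqrt_mul_sqrt_self S hSpsd.nonneg
  open scoped MatrixOrder in
  have hRH : R.IsHermitian := (Matrix.nonneg_iff_posSemidef.mp (CFC.sqrt_nonneg S)).isHermitian
  have hsm : ∀ m : ℕ, S ^ m = R ^ m * R ^ m := by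
    intro m; rw [← hRR, Commute.mul_pow (Commute.refl R)]
  intro t x
  have hconj : R ^ t * (1 - S) * ((R ^ t).conjTranspose) = S ^ t - S ^ (t + 1) := by
    rw [Matrix.conjTranspose_pow, show R.conjTranspose = R from hRH]
    have hS2 : S = R ^ 2 := by rw [← hRR, sq]
    have h2 : R ^ t * S * R ^ t = S ^ (t + 1) := by
      calc R ^ t * S * R ^ t = R ^ t * R ^ 2 * R ^ t := by rw [← hS2]
        _ = R ^ (t + 2 + t) := by rw [← pow_add, ← pow_add]
        _ = (R ^ 2) ^ (t + 1) := by
            rw [show t + 2 + t = 2 * (t + 1) from by ring, pow_mul]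
        _ = S ^ (t + 1) := by rw [← hS2]
    rw [mul_sub, mul_one, sub_mul, h2, ← hsm t]
  have psd : (S ^ t - S ^ (t + 1)).PosSemidef :=
    hconj ▸ h1Spsd.mul_mul_conjTranspose_same (R ^ t)
  have h0 := psd.dotProduct_mulVec_nonneg (Pi.single x 1)
  rw [star_trivial] at h0
  have hval : dotProduct (Pi.single x 1) ((S ^ t - S ^ (t + 1)).mulVec (Pi.single x 1))
      = (S ^ t - S ^ (t + 1)) x x := by
    simp [dotProduct, Matrix.mulVec, Pi.single_apply, Finset.sum_ite_eq,
      Finset.sum_ite_eq', mul_ite]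
  rw [hval, Matrix.sub_apply, hdiag t x, hdiag (t + 1) x] at h0
  linarith
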